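/- arXiv:0706.3734 — 2 statements merged into one kernel-verified Lean document; each statement's English description precedes it below -/
import Mathlib

section
/- Let c ∈ ZMod r with c ≠ 0 and c ≠ 3. Then ∑_{x ∈ ZMod r} χ(x)·χ(x+3)·χ(x+c) = ∑_{x ∈ ZMod r} χ(x)·χ((x−3)² + 4·c·x), as an identity of integers. -/
/-!
For `x ≠ 0`, `χ(x) χ(x² + bx + a) = χ(x + a/x + b)`, and when `a ≠ 0` the equation `x + a/x = t`
has exactly `1 + χ(t² - 4a)` solutions. Summing over `t` and using `∑ χ(t + b) = 0` gives
`∑ χ(x) χ(x² + bx + a) = ∑ χ(t + b) χ(t² - 4a)`. The shift `x ↦ x + c` brings the left-hand side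
of the theorem to this form with `b = 3 - 2c` and `a = c(c - 3)`.
-/

open Finset

open scoped Classical

/-- The quadratic character of `ZMod r` with values in `ℤ`:
`χ(m) = 1` if `m` is a nonzero square, `−1` if `m` is a nonsquare, `χ(0) = 0`. -/
noncomputable def chi (r : ℕ) (m : ZMod r) : ℤ :=
  if m = 0 then 0 else if IsSquare m then 1 else -1

lemma chi_eq_quadraticChar (r : ℕ) [Fact r.Prime] (m : ZMod r) :
    chi r m = quadraticChar (ZMod r) m := by
  rw [quadraticChar_apply, quadraticCharFun, chi]
  split_ifs <;> rfl

section quadraticChar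

variable {F : Type*} [Field F] [Fintype F] [DecidableEq F]

theorem quadraticChar_card_roots_quadratic (hF : ringChar F ≠ 2) (b c : F) :
    (#{x : F | x ^ 2 + b * x + c = 0} : ℤ) = quadraticChar F (b ^ 2 - 4 * c) + 1 := by
  have h2 : (2 : F) ≠ 0 := Ring.two_ne_zero hF
  rw [← quadraticChar_card_sqrts hF, Set.toFinset_ofPred]
  -- completing the square: `(2x + b)² = 4(x² + bx + c) + b² - 4c`
  congr 1
  refine card_equiv ((Equiv.mulLeft₀ 2 h2).trans (Equiv.addRight b)) fun x ↦ ?_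
  simp only [mem_filter, mem_univ, true_and]
  change x ^ 2 + b * x + c = 0 ↔ (2 * x + b) ^ 2 = b ^ 2 - 4 * c
  constructor
  · intro hx
    linear_combination 4 * hx
  · intro hx
    have : 2 ^ 2 * (x ^ 2 + b * x + c) = 0 := by linear_combination hx
    simpa [h2] using this

theorem filter_ne_zero_add_mul_inv_eq (a t : F) (ha : a ≠ 0) :
    (univ.filter fun x : F ↦ x ≠ 0 ∧ x + a * x⁻¹ = t) =
      univ.filter fun x ↦ x ^ 2 + -t * x + a = 0 := by
  ext x
  simp only [mem_filter, mem_univ, true_and]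
  constructor
  · rintro ⟨hx, hxt⟩
    field_simp at hxt
    linear_combination hxt
  · intro hx
    have hx0 : x ≠ 0 := by
      rintro rfl
      exact ha (by simpa using hx)
    refine ⟨hx0, ?_⟩
    field_simp
    linear_combination hx

theorem sum_quadraticChar_mul_quadraticChar_quadratic (hF : ringChar F ≠ 2) (a b : F)
    (ha : a ≠ 0) :
    ∑ x : F, quadraticChar F x * quadraticChar F (x ^ 2 + b * x + a) =
      ∑ x : F, quadraticChar F x * quadraticChar F ((x - b) ^ 2 - 4 * a) := by
  set χ := quadraticChar F
  have hpoint : ∀ x : F, x ≠ 0 → χ x * χ (x ^ 2 + b * x + a) = χ (x + a * x⁻¹ + b) := by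
    intro x hx
    rw [show x ^ 2 + b * x + a = x * (x + a * x⁻¹ + b) by field_simp; ring, map_mul,
      ← mul_assoc, ← sq, quadraticChar_sq_one hx, one_mul]
  have hshift : ∀ g : F → ℤ, ∑ t : F, g (t + b) = ∑ t : F, g t :=
    fun g ↦ Equiv.sum_comp (Equiv.addRight b) g
  calc ∑ x : F, χ x * χ (x ^ 2 + b * x + a)
      = ∑ x ∈ {x : F | x ≠ 0}, χ (x + a * x⁻¹ + b) := by
        rw [sum_filter]
        refine sum_congr rfl fun x _ ↦ ?_
        split_ifs with hx
        · exact hpoint x hx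
        · simp [not_not.mp hx, χ]
    _ = ∑ t : F, (#{x : F | x ≠ 0 ∧ x + a * x⁻¹ = t} : ℤ) * χ (t + b) := by
        rw [← sum_fiberwise' _ (fun x ↦ x + a * x⁻¹) (fun t ↦ χ (t + b))]
        simp only [sum_const, nsmul_eq_mul, filter_filter]
    _ = ∑ t : F, (χ (t ^ 2 - 4 * a) + 1) * χ (t + b) := by
        simp only [filter_ne_zero_add_mul_inv_eq a _ ha, quadraticChar_card_roots_quadratic hF, neg_sq]
        rfl
    _ = ∑ t : F, χ (t + b) * χ (t ^ 2 - 4 * a) := by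
        have hzero : ∑ t : F, χ (t + b) = 0 := (hshift χ).trans (quadraticChar_sum_zero hF)
        simp only [add_mul, one_mul, sum_add_distrib, hzero, add_zero]
        exact sum_congr rfl fun t _ ↦ mul_comm _ _
    _ = ∑ x : F, χ x * χ ((x - b) ^ 2 - 4 * a) := by
        simpa only [add_sub_cancel_right] using hshift (fun t ↦ χ t * χ ((t - b) ^ 2 - 4 * a))

end quadraticChar

theorem stmt15_general (r : ℕ) [NeZero r] (hr : r.Prime) (hr3 : 3 < r)
    (c : ZMod r) (hc0 : c ≠ 0) (hc3 : c ≠ 3) :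
    ∑ x : ZMod r, chi r x * chi r (x + 3) * chi r (x + c) =
      ∑ x : ZMod r, chi r x * chi r ((x - 3) ^ 2 + 4 * c * x) := by
  have : Fact r.Prime := ⟨hr⟩
  have hchar : ringChar (ZMod r) ≠ 2 := by rw [ZMod.ringChar_zmod_n]; omega
  set χ := quadraticChar (ZMod r)
  simp only [chi_eq_quadraticChar]
  -- with `y = x + c`: `x (x + 3) (x + c) = y (y² + (3 - 2c) y + c (c - 3))`
  have hsubst : ∑ x : ZMod r, χ x * χ (x + 3) * χ (x + c) =
      ∑ x : ZMod r, χ x * χ (x ^ 2 + (3 - 2 * c) * x + c * (c - 3)) := by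
    refine Fintype.sum_equiv (Equiv.addRight c) _ _ fun x ↦ ?_
    rw [Equiv.coe_addRight, ← map_mul, ← map_mul, ← map_mul]
    ring_nf
  rw [hsubst, sum_quadraticChar_mul_quadraticChar_quadratic hchar _ _
    (mul_ne_zero hc0 (sub_ne_zero.mpr hc3))]
  exact sum_congr rfl fun x _ ↦ by ring_nf

/-- For `c ≠ 0`, `c ≠ 3`:
`∑_x χ(x)·χ(x+3)·χ(x+c) = ∑_x χ(x)·χ((x−3)² + 4cx)`. -/
theorem stmt15 (r : ℕ) [NeZero r] (hr : r.Prime) (hodd : Odd r) (hr3 : 3 < r)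
    (c : ZMod r) (hc0 : c ≠ 0) (hc3 : c ≠ 3) :
    ∑ x : ZMod r, chi r x * chi r (x + 3) * chi r (x + c) =
      ∑ x : ZMod r, chi r x * chi r ((x - 3) ^ 2 + 4 * c * x) :=
  stmt15_general r hr hr3 c hc0 hc3
end

section
/- Off-diagonal entries of the product S_ζ·S'_ξ vanish: assume additionally r ≡ 1 (mod 4). Then for all natural numbers i ≠ j with 1 ≤ i, j ≤ (r−1)/2 (viewed in ZMod r), ∑_{k ∈ ZMod r, k ≠ 0} χ(k·j) · s(i·k) · ζ^{2·k·j} = 0. -/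
/-!
Expanding `s(ik)` and summing over `k` first turns every inner sum into a twisted Gauss sum, so the
whole sum is `χ(j) · G · T` with `T = ∑ₙ (-1)ⁿ χ(i Tr(uⁿ) + 2j)`, a sum over the norm-one group
`⟨u⟩ ≤ Fˣ` weighted by the quadratic character of that cyclic group. The map `y ↦ y ^ (r - 1)` is
onto `⟨u⟩` with fibres of equal size, and pulls the summand back to `χ(i Tr(y²) + 2j N(y))`: the sign
becomes `χ(N y)` and `N(y) Tr(y ^ (r - 1)) = Tr(y²)`. Writing `y = a + cθ` with `θ² = d` a
nonsquare of `ZMod r`, this is `χ(2(i + j)a² + 2(i - j)dc²)`, and the character sum of a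
nondegenerate binary quadratic form vanishes.
-/

open Complex Finset

open scoped Classical

/-- For `n ∈ ZMod r`, the complex number `ζ^n = exp(2πi·n̂/r)` where `n̂` is the
canonical lift of `n`. -/
noncomputable def zmodExp (r : ℕ) (n : ZMod r) : ℂ :=
  Complex.exp (2 * Real.pi * Complex.I * (n.val : ℂ) / (r : ℂ))

/-- The alternating sum `s(m) = ∑_{j=0}^{r} (−1)^j·ζ^{m·Tr(u^j)}`. -/
noncomputable def sSum (r : ℕ) {F : Type*} [Field F] [Fintype F] [Algebra (ZMod r) F]
    (u : F) (m : ZMod r) : ℂ :=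
  ∑ j ∈ Finset.range (r + 1), (-1 : ℂ) ^ j * zmodExp r (m * Algebra.trace (ZMod r) F (u ^ j))

/-- The quadratic character of `ZMod r` with values in `ℂ`:
`χ(m) = 1` if `m` is a nonzero square, `−1` if `m` is a nonsquare, `χ(0) = 0`. -/
noncomputable def chiC (r : ℕ) (m : ZMod r) : ℂ :=
  if m = 0 then 0 else if IsSquare m then 1 else -1

theorem MonoidHom.sum_comp_of_surjective {G M A : Type*} [Group G] [Fintype G] [Group M]
    [Fintype M] [DecidableEq M] [AddCommMonoid A] (φ : G →* M) (hφ : Function.Surjective φ)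
    (f : M → A) : ∑ g, f (φ g) = #{g | φ g = 1} • ∑ m, f m := by
  rw [sum_comp, image_univ_of_surjective hφ, smul_sum]
  exact sum_congr rfl fun m _ => by
    rw [MonoidHom.card_fiber_eq_of_mem_range φ (hφ m) ⟨1, map_one φ⟩]

theorem sum_range_orderOf_pow {G A : Type*} [Group G] [Fintype G] [AddCommMonoid A] {g : G}
    (hg : Nat.card G ≤ orderOf g) (f : G → A) :
    ∑ i ∈ range (orderOf g), f (g ^ i) = ∑ x, f x := by
  have hinj : Set.InjOn (g ^ ·) (range (orderOf g)) := by
    rw [coe_range]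
    exact pow_injOn_Iio_orderOf
  rw [← sum_image hinj, eq_univ_of_card _ ((card_image_of_injOn hinj).trans ?_)]
  rw [card_range, ← Nat.card_eq_fintype_card]
  exact le_antisymm (orderOf_le_card (G := G)) hg

theorem sum_units_eq_sum {G₀ M : Type*} [GroupWithZero G₀] [Fintype G₀] [AddCommMonoid M]
    {g : G₀ → M} (hg : g 0 = 0) : ∑ y : G₀ˣ, g y = ∑ y, g y :=
  calc ∑ y : G₀ˣ, g y = ∑ y : {x : G₀ // x ≠ 0}, g y :=
        Fintype.sum_equiv unitsEquivNeZero _ _ fun _ => rfl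
    _ = ∑ y ∈ univ.erase 0, g y := (sum_subtype _ (by simp) _).symm
    _ = ∑ y, g y := sum_erase _ hg

theorem sum_mulChar_mul_mul_addChar_mul {K R : Type*} [Field K] [Fintype K] [CommRing R]
    [IsDomain R] {χ : MulChar K R} (hχ : χ.IsQuadratic) (hχ1 : χ ≠ 1) (ψ : AddChar K R)
    (b c : K) : ∑ k, χ (k * b) * ψ (k * c) = χ b * χ c * gaussSum χ ψ := by
  by_cases hc : c = 0
  · simp [hc, MulChar.sum_eq_zero_of_ne_one hχ1, ← sum_mul, MulChar.map_zero]
  · have h := gaussSum_mulShift_eq χ ψ (Units.mk0 c hc)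
    rw [hχ.inv, Units.val_mk0] at h
    rw [mul_assoc, ← h, gaussSum, mul_sum]
    exact sum_congr rfl fun k _ => by rw [map_mul, AddChar.mulShift_apply, mul_comm c k]; ring

section QuadraticCharSums

variable {K : Type*} [Field K] [Fintype K] [DecidableEq K] (hK : ringChar K ≠ 2)
include hK

theorem sum_comp_sq_eq_sum_quadraticChar_add_one_mul (f : K → ℤ) :
    ∑ a, f (a ^ 2) = ∑ s, (quadraticChar K s + 1) * f s := by
  rw [← sum_fiberwise univ (· ^ 2)]
  refine sum_congr rfl fun s _ => ?_
  rw [sum_congr rfl fun a ha => by rw [(mem_filter.1 ha).2], sum_const, nsmul_eq_mul,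
    ← quadraticChar_card_sqrts hK s, Set.toFinset_ofPred]

theorem sum_quadraticChar_mul_add {a : K} (ha : a ≠ 0) (b : K) :
    ∑ s, quadraticChar K (a * s + b) = 0 := by
  rw [← quadraticChar_sum_zero hK]
  exact Fintype.sum_bijective _ ((Equiv.addRight b).bijective.comp (mulLeft_bijective₀ a ha))
    _ _ fun _ => rfl

theorem sum_quadraticChar_mul_quadraticChar_mul_add {a b : K} (hb : b ≠ 0) :
    ∑ s, quadraticChar K s * quadraticChar K (a * s + b) = -quadraticChar K a := by
  have hinv : ∑ s, quadraticChar K (a + b * s⁻¹) = 0 := by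
    rw [← sum_quadraticChar_mul_add hK hb a]
    exact Fintype.sum_bijective _ inv_involutive.bijective _ _ fun s => by rw [add_comm]
  calc ∑ s, quadraticChar K s * quadraticChar K (a * s + b)
      = ∑ s ∈ univ.erase 0, quadraticChar K (a + b * s⁻¹) := by
        rw [← sum_erase univ (a := 0) (by rw [quadraticChar_zero, zero_mul])]
        refine sum_congr rfl fun s hs => ?_
        have hs : s ≠ 0 := ne_of_mem_erase hs
        rw [← map_mul, show s * (a * s + b) = s ^ 2 * (a + b * s⁻¹) by field_simp, map_mul,
          quadraticChar_sq_one' hs, one_mul]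
    _ = -quadraticChar K a := by
        rw [← add_right_inj (quadraticChar K a), add_neg_cancel, ← hinv,
          ← add_sum_erase _ _ (mem_univ 0), inv_zero, mul_zero, add_zero]

theorem sum_quadraticChar_mul_sq_add {a b : K} (ha : a ≠ 0) (hb : b ≠ 0) :
    ∑ s, quadraticChar K (a * s ^ 2 + b) = -quadraticChar K a := by
  rw [sum_comp_sq_eq_sum_quadraticChar_add_one_mul hK (fun s => quadraticChar K (a * s + b))]
  simp only [add_one_mul, sum_add_distrib]
  rw [sum_quadraticChar_mul_quadraticChar_mul_add hK hb, sum_quadraticChar_mul_add hK ha,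
    add_zero]

theorem sum_sum_quadraticChar_mul_sq_add_mul_sq {a b : K} (ha : a ≠ 0) (hb : b ≠ 0) :
    ∑ s, ∑ t, quadraticChar K (a * s ^ 2 + b * t ^ 2) = 0 := by
  have hzero : ∑ s, quadraticChar K (a * s ^ 2 + b * 0 ^ 2) =
      ∑ _s ∈ univ.erase (0 : K), quadraticChar K a := by
    rw [← sum_erase univ (a := 0) (by simp)]
    refine sum_congr rfl fun s hs => ?_
    rw [zero_pow two_ne_zero, mul_zero, add_zero, map_mul,
      quadraticChar_sq_one' (ne_of_mem_erase hs), mul_one]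
  have hnonzero : ∀ t ∈ univ.erase (0 : K),
      ∑ s, quadraticChar K (a * s ^ 2 + b * t ^ 2) = -quadraticChar K a := fun t ht =>
    sum_quadraticChar_mul_sq_add hK ha (mul_ne_zero hb (pow_ne_zero 2 (ne_of_mem_erase ht)))
  rw [sum_comm, ← add_sum_erase _ _ (mem_univ 0), hzero, sum_congr rfl hnonzero,
    ← sum_add_distrib]
  simp

end QuadraticCharSums

section NormOneGroup

variable {F : Type*} [Field F] {q : ℕ}

theorem pow_sub_one_mem_rootsOfUnity [Fintype F] (hF : Fintype.card F = q ^ 2) (y : Fˣ) :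
    y ^ (q - 1) ∈ rootsOfUnity (q + 1) F := by
  rw [_root_.mem_rootsOfUnity, ← pow_mul, mul_comm, ← Nat.pow_two_sub_pow_two, one_pow, ← hF,
    ← Fintype.card_units]
  exact pow_card_eq_one

noncomputable def powSubOneHom [Fintype F] (hF : Fintype.card F = q ^ 2) :
    Fˣ →* rootsOfUnity (q + 1) F :=
  (powMonoidHom (q - 1)).codRestrict _ fun y => pow_sub_one_mem_rootsOfUnity hF y

theorem coe_powSubOneHom [Fintype F] (hF : Fintype.card F = q ^ 2) (y : Fˣ) :
    ((powSubOneHom hF y : Fˣ) : F) = (y : F) ^ (q - 1) :=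
  rfl

theorem surjective_powSubOneHom [Fintype F] (hF : Fintype.card F = q ^ 2) :
    Function.Surjective (powSubOneHom hF) := by
  refine MonoidHom.surjective_of_card_ker_le_div _ ?_
  have hker : (powSubOneHom hF).ker ≤ rootsOfUnity (q - 1) F := fun y hy => by
    rwa [MonoidHom.mem_ker, Subtype.ext_iff] at hy
  have hq : 1 < q := (Nat.one_lt_pow_iff two_ne_zero).1 (hF ▸ Fintype.one_lt_card)
  have : NeZero (q - 1) := ⟨by omega⟩
  have hcard : q ^ 2 - 1 = (q + 1) * (q - 1) := by simpa using Nat.pow_two_sub_pow_two q 1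
  rw [Nat.card_eq_fintype_card (α := Fˣ), Fintype.card_units, hF, hcard]
  calc Nat.card (powSubOneHom hF).ker ≤ q - 1 :=
        (Subgroup.card_le_of_le hker).trans (card_rootsOfUnity F _)
    _ = (q + 1) * (q - 1) / (q + 1) := by simp
    _ ≤ _ := Nat.div_le_div_left (card_rootsOfUnity F _) Nat.card_pos

variable (F) in
/-- On the norm-one group `{x | x ^ (q + 1) = 1}` of a field with `q²` elements, which is cyclic of
order `q + 1`, this is the quadratic character. -/
noncomputable def normOneSign (q : ℕ) (x : F) : ℤ :=
  if x ^ ((q + 1) / 2) = 1 then 1 else -1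

theorem normOneSign_pow_of_orderOf_eq (hF : ringChar F ≠ 2) (hq : Odd q) {u : F}
    (hu : orderOf u = q + 1) (n : ℕ) : normOneSign F q (u ^ n) = (-1) ^ n := by
  have hhalf : u ^ ((q + 1) / 2) = -1 := by
    have := hq.pos
    have hsq : (u ^ ((q + 1) / 2)) ^ 2 = 1 := by
      rw [← pow_mul, Nat.div_mul_cancel hq.add_one.two_dvd, ← hu, pow_orderOf_eq_one]
    exact (mul_self_eq_one_iff.1 ((sq _).symm.trans hsq)).resolve_left
      (pow_ne_one_of_lt_orderOf (by omega) (by omega))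
  rw [normOneSign, ← pow_mul, mul_comm, pow_mul, hhalf]
  rcases n.even_or_odd with hn | hn
  · rw [hn.neg_one_pow, hn.neg_one_pow, if_pos rfl]
  · rw [hn.neg_one_pow, hn.neg_one_pow, if_neg (Ring.neg_one_ne_one_of_char_ne_two hF)]

theorem sum_range_neg_one_pow_mul_eq_sum_rootsOfUnity [Fintype F] (hF : ringChar F ≠ 2)
    (hq : Odd q) {u : F} (hu : orderOf u = q + 1) (g : F → ℤ) :
    ∑ n ∈ range (q + 1), (-1) ^ n * g (u ^ n) =
      ∑ x : rootsOfUnity (q + 1) F, normOneSign F q (x : Fˣ) * g (x : Fˣ) := by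
  have hu0 : u ≠ 0 := by rintro rfl; simp at hu
  let v : rootsOfUnity (q + 1) F :=
    ⟨Units.mk0 u hu0, (mem_rootsOfUnity' _ _).2 (hu ▸ pow_orderOf_eq_one u)⟩
  have hv : orderOf v = q + 1 :=
    (orderOf_injective ((Units.coeHom F).comp (Subgroup.subtype _))
      (Units.val_injective.comp Subtype.val_injective) v).symm.trans hu
  rw [← sum_range_orderOf_pow ((card_rootsOfUnity F _).trans hv.ge), hv]
  refine sum_congr rfl fun n _ => ?_
  simp [v, normOneSign_pow_of_orderOf_eq hF hq hu n]

end NormOneGroup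

section QuadraticExtension

variable {K F : Type*} [Field K] [Fintype K] [Field F] [Fintype F] [Algebra K F]
  (hF : Fintype.card F = Fintype.card K ^ 2)
include hF

theorem finrank_eq_two_of_card_eq_sq : Module.finrank K F = 2 :=
  Nat.pow_right_injective (Fintype.one_lt_card (α := K))
    ((Module.card_eq_pow_finrank (K := K) (V := F)).symm.trans hF)

theorem algebraMap_trace_eq_add_pow (x : F) :
    algebraMap K F (Algebra.trace K F x) = x + x ^ Fintype.card K := by
  rw [FiniteField.algebraMap_trace_eq_sum_pow, finrank_eq_two_of_card_eq_sq hF,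
    Nat.card_eq_fintype_card]
  simp [sum_range_succ]

theorem algebraMap_norm_eq_pow (x : F) :
    algebraMap K F (Algebra.norm K x) = x ^ (Fintype.card K + 1) := by
  rw [FiniteField.algebraMap_norm_eq_prod_pow, finrank_eq_two_of_card_eq_sq hF,
    Nat.card_eq_fintype_card]
  simp [prod_range_succ, pow_succ']

theorem isSquare_algebraMap (hK : ringChar K ≠ 2) (a : K) : IsSquare (algebraMap K F a) := by
  rcases eq_or_ne a 0 with rfl | ha
  · exact ⟨0, by simp⟩
  have hodd := FiniteField.odd_card_of_char_ne_two hK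
  have hexp : Fintype.card F / 2 = (Fintype.card K - 1) * ((Fintype.card K + 1) / 2) := by
    obtain ⟨m, hm⟩ : ∃ m, Fintype.card K = 2 * m + 1 := ⟨Fintype.card K / 2, by omega⟩
    rw [hF, hm, show (2 * m + 1 + 1) / 2 = m + 1 by omega,
      show (2 * m + 1) ^ 2 = 2 * (2 * m * (m + 1)) + 1 by ring, Nat.add_sub_cancel]
    omega
  rw [FiniteField.isSquare_iff (Algebra.ringChar_eq K F ▸ hK) ((map_ne_zero _).2 ha), hexp,
    pow_mul, ← map_pow, FiniteField.pow_card_sub_one_eq_one a ha, map_one, one_pow]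

theorem exists_not_isSquare_sq_eq_algebraMap (hK : ringChar K ≠ 2) :
    ∃ d : K, ∃ θ : F, ¬IsSquare d ∧ θ ^ 2 = algebraMap K F d ∧ θ ^ Fintype.card K = -θ := by
  obtain ⟨d, hd⟩ := FiniteField.exists_nonsquare hK
  obtain ⟨θ, hθ⟩ := isSquare_algebraMap hF hK d
  refine ⟨d, θ, hd, by rw [hθ, sq], ?_⟩
  have hpow : d ^ (Fintype.card K / 2) = -1 := by
    rw [← quadraticChar_eq_pow_of_char_ne_two' hK, quadraticChar_neg_one_iff_not_isSquare.2 hd]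
    simp
  have hodd := FiniteField.odd_card_of_char_ne_two hK
  rw [show Fintype.card K = 2 * (Fintype.card K / 2) + 1 by omega, pow_succ, pow_mul, sq, ← hθ,
    ← map_pow, hpow]
  simp

theorem bijective_algebraMap_add_algebraMap_mul {d : K} (hd : ¬IsSquare d) {θ : F}
    (hθ : θ ^ 2 = algebraMap K F d) :
    Function.Bijective fun p : K × K => algebraMap K F p.1 + algebraMap K F p.2 * θ := by
  have hzero : ∀ a c : K, algebraMap K F a + algebraMap K F c * θ = 0 → c = 0 := by
    intro a c h
    by_contra hc
    refine hd ⟨-a / c, (algebraMap K F).injective ?_⟩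
    have hθ' : θ = algebraMap K F (-a / c) := by
      rw [map_div₀, map_neg, eq_div_iff ((map_ne_zero _).2 hc)]
      linear_combination h
    rw [← hθ, hθ', sq, map_mul]
  rw [Fintype.bijective_iff_injective_and_card]
  refine ⟨fun ⟨a, c⟩ ⟨a', c'⟩ h => ?_, by simp [hF, sq]⟩
  have hc : c = c' :=
    sub_eq_zero.1 (hzero (a - a') (c - c') (by simp only [map_sub]; linear_combination h))
  subst hc
  rw [(algebraMap K F).injective (add_right_cancel h : algebraMap K F a = algebraMap K F a')]

theorem sum_quadraticChar_trace_sq_add_norm [DecidableEq K] (hK : ringChar K ≠ 2) {A B : K}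
    (h₁ : A + B ≠ 0) (h₂ : A - B ≠ 0) :
    ∑ y : F, quadraticChar K (A * Algebra.trace K F (y ^ 2) + 2 * B * Algebra.norm K y) = 0 := by
  obtain ⟨d, θ, hd, hθ, hθq⟩ := exists_not_isSquare_sq_eq_algebraMap hF hK
  have hcoord : ∀ a c : K,
      A * Algebra.trace K F ((algebraMap K F a + algebraMap K F c * θ) ^ 2)
        + 2 * B * Algebra.norm K (algebraMap K F a + algebraMap K F c * θ)
      = 2 * (A + B) * a ^ 2 + 2 * (A - B) * d * c ^ 2 := by
    intro a c
    have hfrob : (algebraMap K F a + algebraMap K F c * θ) ^ Fintype.card K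
        = algebraMap K F a - algebraMap K F c * θ := by
      change FiniteField.frobeniusAlgHom K F _ = _
      simp only [map_add, map_mul, AlgHom.commutes, FiniteField.coe_frobeniusAlgHom, hθq]
      ring
    apply (algebraMap K F).injective
    rw [map_add, map_mul, map_mul, map_mul, algebraMap_trace_eq_add_pow hF,
      algebraMap_norm_eq_pow hF, pow_right_comm _ 2, pow_succ _ (Fintype.card K), hfrob]
    simp only [map_add, map_mul, map_ofNat, map_sub, map_pow, ← hθ]
    ring
  rw [← Fintype.sum_bijective _ (bijective_algebraMap_add_algebraMap_mul hF hd hθ) _ _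
    fun _ => rfl, Fintype.sum_prod_type]
  simp only [hcoord]
  have h2 : (2 : K) ≠ 0 := Ring.two_ne_zero hK
  exact sum_sum_quadraticChar_mul_sq_add_mul_sq hK (mul_ne_zero h2 h₁)
    (mul_ne_zero (mul_ne_zero h2 h₂) fun h => hd ⟨0, by simp [h]⟩)

theorem norm_mul_trace_pow_sub_one {y : F} (hy : y ≠ 0) :
    Algebra.norm K y * Algebra.trace K F (y ^ (Fintype.card K - 1)) =
      Algebra.trace K F (y ^ 2) := by
  apply (algebraMap K F).injective
  have hq : y ^ Fintype.card K ^ 2 = y := hF ▸ FiniteField.pow_card y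
  have hz : y ^ Fintype.card K ≠ 0 := pow_ne_zero _ hy
  rw [map_mul, algebraMap_norm_eq_pow hF, algebraMap_trace_eq_add_pow hF,
    algebraMap_trace_eq_add_pow hF, pow_sub₀ _ hy Fintype.card_pos, pow_one, ← div_eq_mul_inv,
    div_pow, ← pow_mul, ← sq, hq]
  field_simp
  ring

theorem normOneSign_pow_card_sub_one [DecidableEq K] (hK : ringChar K ≠ 2) {y : F} (hy : y ≠ 0) :
    normOneSign F (Fintype.card K) (y ^ (Fintype.card K - 1)) =
      quadraticChar K (Algebra.norm K y) := by
  have hodd := FiniteField.odd_card_of_char_ne_two hK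
  have hexp : (Fintype.card K - 1) * ((Fintype.card K + 1) / 2) =
      (Fintype.card K + 1) * (Fintype.card K / 2) := by
    obtain ⟨m, hm⟩ : ∃ m, Fintype.card K = 2 * m + 1 := ⟨Fintype.card K / 2, by omega⟩
    rw [hm, show (2 * m + 1 + 1) / 2 = m + 1 by omega, show (2 * m + 1) / 2 = m by omega,
      Nat.add_sub_cancel]
    ring
  have hN : Algebra.norm K y ≠ 0 := Algebra.norm_ne_zero_iff.2 hy
  rw [normOneSign, ← pow_mul, hexp, pow_mul, ← algebraMap_norm_eq_pow hF, ← map_pow,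
    ← quadraticChar_eq_pow_of_char_ne_two' hK]
  rcases quadraticChar_dichotomy hN with h | h
  · rw [h, if_pos (by simp)]
  · rw [h, if_neg (by simpa using Ring.neg_one_ne_one_of_char_ne_two (Algebra.ringChar_eq K F ▸ hK))]

theorem sum_range_neg_one_pow_mul_quadraticChar_trace_pow [DecidableEq K] (hK : ringChar K ≠ 2)
    {u : F} (hu : orderOf u = Fintype.card K + 1) {A B : K} (h₁ : A + B ≠ 0) (h₂ : A - B ≠ 0) :
    ∑ n ∈ range (Fintype.card K + 1),
      (-1 : ℤ) ^ n * quadraticChar K (A * Algebra.trace K F (u ^ n) + 2 * B) = 0 := by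
  let f : F → ℤ := fun x =>
    normOneSign F (Fintype.card K) x * quadraticChar K (A * Algebra.trace K F x + 2 * B)
  have hpullback : ∀ y : Fˣ, f (powSubOneHom hF y : Fˣ) =
      quadraticChar K (A * Algebra.trace K F ((y : F) ^ 2) + 2 * B * Algebra.norm K (y : F)) := by
    intro y
    rw [coe_powSubOneHom]
    simp only [f]
    rw [normOneSign_pow_card_sub_one hF hK y.ne_zero, ← map_mul,
      ← norm_mul_trace_pow_sub_one hF y.ne_zero]
    ring_nf
  have hfibres := MonoidHom.sum_comp_of_surjective (powSubOneHom hF) (surjective_powSubOneHom hF)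
    fun x => f (x : Fˣ)
  rw [Fintype.sum_congr _ _ hpullback, sum_units_eq_sum (g := fun y : F =>
      quadraticChar K (A * Algebra.trace K F (y ^ 2) + 2 * B * Algebra.norm K y)) (by simp),
    sum_quadraticChar_trace_sq_add_norm hF hK h₁ h₂, eq_comm, smul_eq_zero] at hfibres
  rw [sum_range_neg_one_pow_mul_eq_sum_rootsOfUnity (Algebra.ringChar_eq K F ▸ hK)
    (Nat.odd_iff.2 (FiniteField.odd_card_of_char_ne_two hK)) hu
    fun x => quadraticChar K (A * Algebra.trace K F x + 2 * B)]
  exact hfibres.resolve_left (card_ne_zero.2 ⟨1, by simp⟩)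

end QuadraticExtension

theorem natCast_add_natCast_ne_zero {r i j : ℕ} (hij : i ≠ j) (h : i + j < r) :
    (i : ZMod r) + j ≠ 0 := by
  rw [← Nat.cast_add, Ne, ZMod.natCast_eq_zero_iff]
  exact fun hdvd => by have := Nat.le_of_dvd (by omega) hdvd; omega

theorem natCast_sub_natCast_ne_zero {r i j : ℕ} (hij : i ≠ j) (hi : i < r) (hj : j < r) :
    (i : ZMod r) - j ≠ 0 := by
  rwa [sub_ne_zero, Ne, ZMod.natCast_eq_natCast_iff', Nat.mod_eq_of_lt hi, Nat.mod_eq_of_lt hj]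

theorem chiC_eq_ringHomComp (r : ℕ) [Fact r.Prime] :
    chiC r = (quadraticChar (ZMod r)).ringHomComp (Int.castRingHom ℂ) := by
  ext m
  simp only [chiC, MulChar.ringHomComp_apply, quadraticChar_apply, quadraticCharFun]
  split_ifs <;> simp

theorem zmodExp_eq_stdAddChar (r : ℕ) [NeZero r] : zmodExp r = ZMod.stdAddChar := by
  ext n
  rw [zmodExp, ZMod.stdAddChar_apply, ZMod.toCircle_apply]

theorem sum_mul_sSum_mul_stdAddChar {r : ℕ} [Fact r.Prime] {χ : MulChar (ZMod r) ℂ}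
    (hχ : χ.IsQuadratic) (hχ1 : χ ≠ 1) {F : Type*} [Field F] [Fintype F] [Algebra (ZMod r) F]
    (u : F) (a b : ZMod r) :
    ∑ k, χ (k * b) * sSum r u (a * k) * ZMod.stdAddChar (2 * k * b) =
      χ b * gaussSum χ ZMod.stdAddChar *
        ∑ n ∈ range (r + 1), (-1) ^ n * χ (a * Algebra.trace (ZMod r) F (u ^ n) + 2 * b) :=
  calc ∑ k, χ (k * b) * sSum r u (a * k) * ZMod.stdAddChar (2 * k * b)
      = ∑ n ∈ range (r + 1), (-1) ^ n * ∑ k, χ (k * b) *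
          ZMod.stdAddChar (k * (a * Algebra.trace (ZMod r) F (u ^ n) + 2 * b)) := by
        simp only [sSum, zmodExp_eq_stdAddChar, mul_sum, sum_mul]
        rw [sum_comm]
        refine sum_congr rfl fun n _ => sum_congr rfl fun k _ => ?_
        rw [mul_add, AddChar.map_add_eq_mul]
        ring_nf
    _ = _ := by
        rw [mul_sum]
        refine sum_congr rfl fun n _ => ?_
        rw [sum_mulChar_mul_mul_addChar_mul hχ hχ1]
        ring

theorem stmt17_general (r : ℕ) [NeZero r] (hr : r.Prime) (hodd : Odd r)
    (F : Type*) [Field F] [Fintype F] [Algebra (ZMod r) F]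
    (hcard : Fintype.card F = r ^ 2)
    (u : F) (hu : orderOf u = r + 1)
    (i j : ℕ) (hij : i ≠ j) (hi2 : i ≤ (r - 1) / 2)
    (hj2 : j ≤ (r - 1) / 2) :
    ∑ k ∈ Finset.univ.filter (fun k : ZMod r => k ≠ 0),
        chiC r (k * (j : ZMod r)) * sSum r u ((i : ZMod r) * k) *
          zmodExp r (2 * k * (j : ZMod r)) = 0 := by
  have : Fact r.Prime := ⟨hr⟩
  have hK : ringChar (ZMod r) ≠ 2 := by
    rw [ZMod.ringChar_zmod_n]
    rintro rfl
    exact Nat.not_even_iff_odd.2 hodd even_two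
  set χ := (quadraticChar (ZMod r)).ringHomComp (Int.castRingHom ℂ)
  have hχ1 : χ ≠ 1 :=
    (MulChar.ringHomComp_ne_one_iff Int.cast_injective).2 (quadraticChar_ne_one hK)
  have hT := sum_range_neg_one_pow_mul_quadraticChar_trace_pow (F := F) (by rw [ZMod.card, hcard])
    hK (by rw [ZMod.card, hu]) (natCast_add_natCast_ne_zero hij (by omega))
    (natCast_sub_natCast_ne_zero hij (by omega) (by omega))
  rw [ZMod.card] at hT
  rw [filter_ne', sum_erase _ (by simp [chiC]), chiC_eq_ringHomComp, zmodExp_eq_stdAddChar,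
    sum_mul_sSum_mul_stdAddChar ((quadraticChar_isQuadratic _).comp _) hχ1]
  exact mul_eq_zero_of_right _ (by simpa [χ] using congrArg (Int.cast : ℤ → ℂ) hT)

/-- Off-diagonal entries of `S_ζ·S'_ξ` vanish: for `r ≡ 1 (mod 4)` and
`1 ≤ i, j ≤ (r−1)/2` with `i ≠ j`, `∑_{k≠0} χ(kj)·s(ik)·ζ^{2kj} = 0`. -/
theorem stmt17 (r : ℕ) [NeZero r] (hr : r.Prime) (hodd : Odd r) (h3 : r % 3 = 2)
    (h4 : r % 4 = 1)
    (F : Type*) [Field F] [Fintype F] [Algebra (ZMod r) F]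
    (hcard : Fintype.card F = r ^ 2)
    (u : F) (hu : orderOf u = r + 1)
    (i j : ℕ) (hij : i ≠ j) (hi1 : 1 ≤ i) (hi2 : i ≤ (r - 1) / 2)
    (hj1 : 1 ≤ j) (hj2 : j ≤ (r - 1) / 2) :
    ∑ k ∈ Finset.univ.filter (fun k : ZMod r => k ≠ 0),
        chiC r (k * (j : ZMod r)) * sSum r u ((i : ZMod r) * k) *
          zmodExp r (2 * k * (j : ZMod r)) = 0 :=
  stmt17_general r hr hodd F hcard u hu i j hij hi2 hj2
end
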